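/- arXiv:1910.00319 — 2 statements merged into one kernel-verified Lean document; each statement's English description precedes it below -/
import Mathlib

section
/- The map Φ sending (I₃ + ε Ω_t)·R ∈ SO(3, R[ε]) to the rigid motion x ↦ R x + t in SE(3,ℝ) is a group isomorphism. -/
/-!
A dual matrix is `A = R + ε N` with `R = A.map fst`, `N = A.map snd`. The condition `A Aᵀ = 1`
splits into `R Rᵀ = 1` and skewness of `N Rᵀ`, so `N Rᵀ = Ω_t` for a unique `t`; and `det A = 1`
reduces to `det R = 1`, since `(det A)² = 1` forces the dual part of `det A` to vanish. Thus
`A ↦ (R, t)` identifies `SO(3, ℝ[ε])` with pairs (rotation, translation). Products match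
composition of rigid motions because `(I + ε Ω_s) R (I + ε Ω_t) R' = (I + ε Ω_{s + R t}) R R'`,
which rests on `R Ω_t = Ω_{R t} R`, i.e. on rotations preserving the cross product.
-/

open DualNumber Matrix

/-- Skew-symmetric matrix of the cross product `x ↦ t × x`. -/
def Omega (t : Fin 3 → ℝ) : Matrix (Fin 3) (Fin 3) ℝ :=
  !![0, -t 2, t 1; t 2, 0, -t 0; -t 1, t 0, 0]

/-- The vector `t` such that a skew-symmetric matrix `N` equals `Ω_t`. -/
def vecOf (N : Matrix (Fin 3) (Fin 3) ℝ) : Fin 3 → ℝ :=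
  ![N 2 1, N 0 2, N 1 0]

/-- `SO(3, ℝ[ε])` as a subset of matrices over the dual numbers. -/
def SO3Dual : Set (Matrix (Fin 3) (Fin 3) (DualNumber ℝ)) :=
  {A | A * Aᵀ = 1 ∧ A.det = 1}

/-- `SE(3, ℝ)`: rigid motions `x ↦ R x + t` with `R ∈ SO(3, ℝ)`. -/
def SE3 : Set ((Fin 3 → ℝ) → (Fin 3 → ℝ)) :=
  {f | ∃ (R : Matrix (Fin 3) (Fin 3) ℝ) (t : Fin 3 → ℝ),
    R * Rᵀ = 1 ∧ R.det = 1 ∧ f = fun x => R.mulVec x + t}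

/-- The map `Φ` sending `A = (I₃ + ε Ω_t)·R ∈ SO(3, ℝ[ε])` to the rigid motion
`x ↦ R x + t`: here `R` is the real part of `A` and `Ω_t = M·Rᵀ` where `M` is
the dual part of `A`. -/
noncomputable def Phi (A : Matrix (Fin 3) (Fin 3) (DualNumber ℝ)) :
    (Fin 3 → ℝ) → (Fin 3 → ℝ) :=
  fun x => (A.map (TrivSqZeroExt.fst : DualNumber ℝ → ℝ)).mulVec x +
    vecOf ((A.map (TrivSqZeroExt.snd : DualNumber ℝ → ℝ)) *
      (A.map (TrivSqZeroExt.fst : DualNumber ℝ → ℝ))ᵀ)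

open TrivSqZeroExt

section DualMatrix

variable {n R : Type} [Fintype n] [DecidableEq n] [CommRing R]

theorem map_fst_mul (A B : Matrix n n R[ε]) :
    (A * B).map fst = A.map fst * B.map fst :=
  congr_arg fst (map_mul dualNumberEquiv A B)

theorem map_snd_mul (A B : Matrix n n R[ε]) :
    (A * B).map snd = A.map fst * B.map snd + A.map snd * B.map fst :=
  (congr_arg snd (map_mul dualNumberEquiv A B)).trans (DualNumber.snd_mul _ _)

theorem map_fst_one : (1 : Matrix n n R[ε]).map fst = 1 :=
  congr_arg fst (map_one dualNumberEquiv)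

theorem map_snd_one : (1 : Matrix n n R[ε]).map snd = 0 :=
  congr_arg snd (map_one dualNumberEquiv)

theorem det_map_fst (A : Matrix n n R[ε]) : (A.map fst).det = fst A.det :=
  ((fstHom R R R).toRingHom.map_det A).symm

theorem ext_map_fst_map_snd {A B : Matrix n n R[ε]} (h₁ : A.map fst = B.map fst)
    (h₂ : A.map snd = B.map snd) : A = B :=
  dualNumberEquiv.injective (TrivSqZeroExt.ext h₁ h₂)

theorem mul_transpose_eq_one_iff (A : Matrix n n R[ε]) :
    A * Aᵀ = 1 ↔ A.map fst * (A.map fst)ᵀ = 1 ∧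
      A.map snd * (A.map fst)ᵀ + (A.map snd * (A.map fst)ᵀ)ᵀ = 0 := by
  have h : (A * Aᵀ).map snd = A.map snd * (A.map fst)ᵀ + (A.map snd * (A.map fst)ᵀ)ᵀ := by
    rw [map_snd_mul, add_comm, transpose_mul, transpose_transpose]; rfl
  constructor
  · intro hA
    exact ⟨by rw [← map_fst_one, ← hA, map_fst_mul]; rfl, by rw [← h, hA, map_snd_one]⟩
  · rintro ⟨h₁, h₂⟩
    refine ext_map_fst_map_snd ?_ ?_
    · rw [map_fst_mul, map_fst_one]; exact h₁
    · rw [h, h₂, map_snd_one]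

theorem DualNumber.snd_eq_zero_of_mul_self_eq_one [NoZeroDivisors R] [NeZero (2 : R)]
    {x : R[ε]} (hx : x * x = 1) : snd x = 0 := by
  have h₁ : fst x * fst x = 1 := by rw [← fst_mul, hx, fst_one]
  have h₂ : 2 * (fst x * snd x) = 0 := by
    rw [← snd_one (R := R) (M := R), ← hx, DualNumber.snd_mul]; ring
  calc snd x = fst x * (fst x * snd x) := by rw [← mul_assoc, h₁, one_mul]
    _ = 0 := by rw [(mul_eq_zero.mp h₂).resolve_left two_ne_zero, mul_zero]

theorem det_eq_one_iff_of_mul_transpose_eq_one [NoZeroDivisors R] [NeZero (2 : R)]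
    {A : Matrix n n R[ε]} (hA : A * Aᵀ = 1) : A.det = 1 ↔ (A.map fst).det = 1 := by
  have hsnd : snd A.det = 0 := DualNumber.snd_eq_zero_of_mul_self_eq_one <| by
    rw [← det_one (n := n), ← hA, det_mul, det_transpose]
  rw [det_map_fst]
  constructor
  · intro h; rw [h, fst_one]
  · intro h; exact TrivSqZeroExt.ext (h.trans fst_one.symm) (hsnd.trans snd_one.symm)

end DualMatrix

section CrossProduct

variable {R : Type*} [CommRing R]

theorem cross_mulVec_mulVec (M : Matrix (Fin 3) (Fin 3) R) (a b : Fin 3 → R) :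
    (M *ᵥ a) ⨯₃ (M *ᵥ b) = (adjugate M)ᵀ *ᵥ (a ⨯₃ b) := by
  ext i
  fin_cases i <;>
    simp [cross_apply, adjugate_fin_three, mulVec, dotProduct, Fin.sum_univ_three] <;> ring

theorem mulVec_cross_of_mul_transpose_eq_one {M : Matrix (Fin 3) (Fin 3) R}
    (hM : M * Mᵀ = 1) (hdet : M.det = 1) (a b : Fin 3 → R) :
    M *ᵥ (a ⨯₃ b) = (M *ᵥ a) ⨯₃ (M *ᵥ b) := by
  have hadj : adjugate M = Mᵀ := by
    rw [← mul_one (adjugate M), ← hM, ← mul_assoc, adjugate_mul, hdet, one_smul, one_mul]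
  rw [cross_mulVec_mulVec, hadj, transpose_transpose]

end CrossProduct

theorem Omega_mulVec (t x : Fin 3 → ℝ) : Omega t *ᵥ x = t ⨯₃ x := by
  ext i
  fin_cases i <;> simp [Omega, cross_apply, mulVec, dotProduct, Fin.sum_univ_three] <;> ring

theorem Omega_add (s t : Fin 3 → ℝ) : Omega (s + t) = Omega s + Omega t := by
  rw [ext_iff_mulVec]
  intro x
  simp only [add_mulVec, Omega_mulVec, map_add, LinearMap.add_apply]

theorem Omega_add_transpose (t : Fin 3 → ℝ) : Omega t + (Omega t)ᵀ = 0 := by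
  ext i j
  fin_cases i <;> fin_cases j <;> simp [Omega]

theorem vecOf_Omega (t : Fin 3 → ℝ) : vecOf (Omega t) = t := by
  ext i
  fin_cases i <;> simp [Omega, vecOf]

theorem Omega_vecOf {N : Matrix (Fin 3) (Fin 3) ℝ} (hN : N + Nᵀ = 0) :
    Omega (vecOf N) = N := by
  have h : ∀ i j, N i j + N j i = 0 := fun i j => by simpa using congr_fun₂ hN i j
  ext i j
  fin_cases i <;> fin_cases j <;> simp [Omega, vecOf] <;>
    linarith [h 0 0, h 1 1, h 2 2, h 0 1, h 0 2, h 1 2]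

theorem mul_Omega_of_mul_transpose_eq_one {R : Matrix (Fin 3) (Fin 3) ℝ} (hR : R * Rᵀ = 1)
    (hdet : R.det = 1) (t : Fin 3 → ℝ) : R * Omega t = Omega (R *ᵥ t) * R := by
  rw [ext_iff_mulVec]
  intro x
  rw [← mulVec_mulVec, ← mulVec_mulVec, Omega_mulVec, Omega_mulVec,
    mulVec_cross_of_mul_transpose_eq_one hR hdet]

theorem rigidMotion_injective {R R' : Matrix (Fin 3) (Fin 3) ℝ} {t t' : Fin 3 → ℝ}
    (h : (fun x => R *ᵥ x + t) = fun x => R' *ᵥ x + t') : R = R' ∧ t = t' := by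
  have ht : t = t' := by simpa using congr_fun h 0
  subst ht
  exact ⟨ext_iff_mulVec.mpr fun x => add_right_cancel (congr_fun h x), rfl⟩

/-- `(I₃ + ε Ω_t) R`: the dual matrix with real part `R` and dual part `Ω_t R`. -/
noncomputable def dualOfMotion (R : Matrix (Fin 3) (Fin 3) ℝ) (t : Fin 3 → ℝ) :
    Matrix (Fin 3) (Fin 3) ℝ[ε] :=
  dualNumberEquiv.symm ⟨R, Omega t * R⟩

section DualOfMotion

variable {R : Matrix (Fin 3) (Fin 3) ℝ}

@[simp] theorem map_fst_dualOfMotion (t : Fin 3 → ℝ) : (dualOfMotion R t).map fst = R := rfl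

@[simp] theorem map_snd_dualOfMotion (t : Fin 3 → ℝ) :
    (dualOfMotion R t).map snd = Omega t * R := rfl

theorem Phi_dualOfMotion (hR : R * Rᵀ = 1) (t : Fin 3 → ℝ) :
    Phi (dualOfMotion R t) = fun x => R *ᵥ x + t := by
  funext x
  change R *ᵥ x + vecOf (Omega t * R * Rᵀ) = R *ᵥ x + t
  rw [mul_assoc, hR, mul_one, vecOf_Omega]

theorem dualOfMotion_mem_SO3Dual (hR : R * Rᵀ = 1) (hdet : R.det = 1) (t : Fin 3 → ℝ) :
    dualOfMotion R t ∈ SO3Dual := by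
  have horth : dualOfMotion R t * (dualOfMotion R t)ᵀ = 1 := by
    refine (mul_transpose_eq_one_iff _).mpr ⟨hR, ?_⟩
    rw [map_fst_dualOfMotion, map_snd_dualOfMotion, mul_assoc, hR, mul_one]
    exact Omega_add_transpose t
  exact ⟨horth, (det_eq_one_iff_of_mul_transpose_eq_one horth).mpr hdet⟩

theorem exists_eq_dualOfMotion {A : Matrix (Fin 3) (Fin 3) ℝ[ε]} (hA : A ∈ SO3Dual) :
    ∃ R t, R * Rᵀ = 1 ∧ R.det = 1 ∧ A = dualOfMotion R t := by
  obtain ⟨horth, hdet⟩ := hA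
  obtain ⟨hR, hskew⟩ := (mul_transpose_eq_one_iff A).mp horth
  refine ⟨A.map fst, vecOf (A.map snd * (A.map fst)ᵀ), hR,
    (det_eq_one_iff_of_mul_transpose_eq_one horth).mp hdet, ext_map_fst_map_snd rfl ?_⟩
  rw [map_snd_dualOfMotion, Omega_vecOf hskew, mul_assoc, mul_eq_one_comm.mp hR, mul_one]

theorem dualOfMotion_mul (hR : R * Rᵀ = 1) (hdet : R.det = 1) (R' : Matrix (Fin 3) (Fin 3) ℝ)
    (s t : Fin 3 → ℝ) :
    dualOfMotion R s * dualOfMotion R' t = dualOfMotion (R * R') (s + R *ᵥ t) := by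
  refine ext_map_fst_map_snd (map_fst_mul _ _) ?_
  rw [map_snd_mul]
  simp only [map_fst_dualOfMotion, map_snd_dualOfMotion]
  rw [← mul_assoc, mul_Omega_of_mul_transpose_eq_one hR hdet, Omega_add]
  noncomm_ring

end DualOfMotion

/-- `Φ : SO(3, ℝ[ε]) → SE(3, ℝ)`, `(I₃ + ε Ω_t)·R ↦ (x ↦ R x + t)`, is a group
isomorphism: it is a bijection of `SO(3, ℝ[ε])` onto `SE(3, ℝ)` sending products
to composition of rigid motions. -/
theorem stmt2 :
    Set.BijOn Phi SO3Dual SE3 ∧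
    ∀ A ∈ SO3Dual, ∀ B ∈ SO3Dual, Phi (A * B) = Phi A ∘ Phi B := by
  refine ⟨⟨?mapsTo, ?injOn, ?surjOn⟩, ?map_mul⟩
  · rintro _ hA
    obtain ⟨R, t, hR, hdet, rfl⟩ := exists_eq_dualOfMotion hA
    exact ⟨R, t, hR, hdet, Phi_dualOfMotion hR t⟩
  · rintro _ hA _ hB h
    obtain ⟨R, t, hR, -, rfl⟩ := exists_eq_dualOfMotion hA
    obtain ⟨R', t', hR', -, rfl⟩ := exists_eq_dualOfMotion hB
    rw [Phi_dualOfMotion hR, Phi_dualOfMotion hR'] at h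
    obtain ⟨rfl, rfl⟩ := rigidMotion_injective h
    rfl
  · rintro _ ⟨R, t, hR, hdet, rfl⟩
    exact ⟨dualOfMotion R t, dualOfMotion_mem_SO3Dual hR hdet t, Phi_dualOfMotion hR t⟩
  · rintro _ hA _ hB
    obtain ⟨R, s, hR, hdet, rfl⟩ := exists_eq_dualOfMotion hA
    obtain ⟨R', t, hR', -, rfl⟩ := exists_eq_dualOfMotion hB
    have hRR' : R * R' * (R * R')ᵀ = 1 := by
      rw [transpose_mul, mul_assoc, ← mul_assoc R', hR', one_mul, hR]
    rw [dualOfMotion_mul hR hdet, Phi_dualOfMotion hRR', Phi_dualOfMotion hR,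
      Phi_dualOfMotion hR']
    funext x
    simp only [Function.comp_apply, mulVec_add, mulVec_mulVec]
    abel
end

section
/- The map σ: ℙ³(ℝ) × ℙ³(ℝ) → ℙ⁷(ℝ) × ℙ³(ℝ), ([w],[r,s,t,u]) ↦ ([x,y],[w]) with xᵢ = wᵢ r and 2y₀ = −w₁s − w₂t − w₃u, 2y₁ = w₀s + w₃t − w₂u, 2y₂ = −w₃s + w₀t + w₁u, 2y₃ = w₂s − w₁t + w₀u, is well-defined (i.e. (x,y) never vanishes identically) and its image lies in Bl_E(S). -/
/-!
Identify `ℝ⁴` with the quaternions. Then `x = r w` and `y = ½ q w`, where `q = s i + t j + u k`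
is the imaginary part of `r + s i + t j + u k`. For any quaternion `q`,
`⟪q w, w⟫ = Re (q w w̄) = Re q · |w|²`, which vanishes for imaginary `q`; this gives both quadrics.
Since `ℍ` has no zero divisors, `x = y = 0` with `w ≠ 0` forces `r = 0` and `q = 0`.
-/

/-- The defining conditions of `Bl_E(S) ⊂ ℙ⁷(ℝ) × ℙ³(ℝ)`, on homogeneous coordinates. -/
def inBl (x y w : Fin 4 → ℝ) : Prop :=
  (∑ i : Fin 4, x i * y i = 0) ∧ (∑ i : Fin 4, y i * w i = 0) ∧
    ∀ i j : Fin 4, x i * w j = x j * w i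

/-- The `x`-part of `σ([w], [r,s,t,u])`: `xᵢ = wᵢ r`. -/
def sigmaX (w p : Fin 4 → ℝ) : Fin 4 → ℝ := fun i => w i * p 0

/-- The `y`-part of `σ([w], [r,s,t,u])`. -/
noncomputable def sigmaY (w p : Fin 4 → ℝ) : Fin 4 → ℝ :=
  ![(-(w 1 * p 1) - w 2 * p 2 - w 3 * p 3) / 2,
    (w 0 * p 1 + w 3 * p 2 - w 2 * p 3) / 2,
    (-(w 3 * p 1) + w 0 * p 2 + w 1 * p 3) / 2,
    (w 2 * p 1 - w 1 * p 2 + w 0 * p 3) / 2]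

open Quaternion
open scoped RealInnerProductSpace

def toQuaternion : (Fin 4 → ℝ) ≃ₗ[ℝ] ℍ[ℝ] := (QuaternionAlgebra.linearEquivTuple _ _ _).symm

section toQuaternion

variable (v : Fin 4 → ℝ)

@[simp] lemma re_toQuaternion : (toQuaternion v).re = v 0 := rfl
@[simp] lemma imI_toQuaternion : (toQuaternion v).imI = v 1 := rfl
@[simp] lemma imJ_toQuaternion : (toQuaternion v).imJ = v 2 := rfl
@[simp] lemma imK_toQuaternion : (toQuaternion v).imK = v 3 := rfl

end toQuaternion

lemma sum_mul_eq_inner_toQuaternion (u v : Fin 4 → ℝ) :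
    ∑ i, u i * v i = ⟪toQuaternion u, toQuaternion v⟫ := by
  simp [inner_def, Fin.sum_univ_four]

lemma toQuaternion_sigmaX (w p : Fin 4 → ℝ) :
    toQuaternion (sigmaX w p) = p 0 • toQuaternion w := by
  ext <;> simp [sigmaX, mul_comm]

lemma toQuaternion_sigmaY (w p : Fin 4 → ℝ) :
    toQuaternion (sigmaY w p) = (2⁻¹ : ℝ) • ((toQuaternion p).im * toQuaternion w) := by
  ext <;> simp [sigmaY] <;> ring

namespace Quaternion

lemma inner_mul_self (q a : ℍ) : ⟪q * a, a⟫ = q.re * normSq a := by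
  rw [inner_def, mul_assoc, self_mul_star, mul_coe_eq_smul, re_smul, smul_eq_mul, mul_comm]

lemma inner_im_mul_self (q a : ℍ) : ⟪q.im * a, a⟫ = 0 := by
  rw [inner_mul_self, re_im, zero_mul]

end Quaternion

lemma eq_zero_of_sigmaX_eq_zero_of_sigmaY_eq_zero {w p : Fin 4 → ℝ} (hw : w ≠ 0)
    (hx : sigmaX w p = 0) (hy : sigmaY w p = 0) : p = 0 := by
  have hw' : toQuaternion w ≠ 0 := toQuaternion.map_ne_zero_iff.mpr hw
  have hre : p 0 = 0 := by
    simpa [toQuaternion_sigmaX, hw'] using congrArg toQuaternion hx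
  have him : (toQuaternion p).im = 0 := by
    simpa [toQuaternion_sigmaY, hw'] using congrArg toQuaternion hy
  rw [← toQuaternion.map_eq_zero_iff, ← re_add_im (toQuaternion p), him, re_toQuaternion, hre]
  simp

/-- `σ` is well-defined (the image homogeneous coordinates `(x, y)` never all vanish)
and its image lies in `Bl_E(S)`. -/
theorem stmt15 (w p : Fin 4 → ℝ) (hw : w ≠ 0) (hp : p ≠ 0) :
    ¬(sigmaX w p = 0 ∧ sigmaY w p = 0) ∧ inBl (sigmaX w p) (sigmaY w p) w := by
  have horth := inner_im_mul_self (toQuaternion p) (toQuaternion w)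
  refine ⟨fun ⟨hx, hy⟩ => hp (eq_zero_of_sigmaX_eq_zero_of_sigmaY_eq_zero hw hx hy), ?_, ?_, ?_⟩
  · rw [sum_mul_eq_inner_toQuaternion, toQuaternion_sigmaX, toQuaternion_sigmaY, inner_smul_left,
      inner_smul_right, real_inner_comm, horth]
    simp
  · rw [sum_mul_eq_inner_toQuaternion, toQuaternion_sigmaY, inner_smul_left, horth]
    simp
  · intro i j
    simp only [sigmaX]
    ring
end
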